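/- arXiv:1901.08949 — 4 statements merged into one kernel-verified Lean document; each statement's English description precedes it below -/
import Mathlib

section
/- For a symmetric positive semidefinite d×d matrix V and k ∈ {1,…,d}, the sum of the k largest eigenvalues of V equals the maximum of tr(UVU^T) over matrices U ∈ ℝ^{k×d} with UU^T = I_k (Ky Fan's variational principle). -/
noncomputable section
open MeasureTheory Matrix

def eigDesc {d : ℕ} (V : Matrix (Fin d) (Fin d) ℝ) (h : V.IsHermitian) : Fin d → ℝ :=
  fun i => h.eigenvalues (Tuple.sort h.eigenvalues i.rev)

/-- Sum of the `k` largest eigenvalues of a Hermitian matrix. -/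
def topEigSum {d : ℕ} (k : ℕ) (V : Matrix (Fin d) (Fin d) ℝ) (h : V.IsHermitian) : ℝ :=
  ∑ i ∈ Finset.univ.filter (fun i : Fin d => (i : ℕ) < k), eigDesc V h i

/-!
Conjugating by an orthogonal matrix does not change the set of traces `tr (U V Uᵀ)` over
`U Uᵀ = 1`, so by the spectral theorem `V` may be replaced by the diagonal matrix of its
eigenvalues `λ₁ ≥ ⋯ ≥ λ_d`. For diagonal `V` the rows of `U` selecting the first `k` coordinates
attain `λ₁ + ⋯ + λ_k`. Conversely `tr (U V Uᵀ) = ∑ⱼ λⱼ mⱼ` with `mⱼ = (UᵀU)ⱼⱼ`; since `UᵀU` is an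
orthogonal projection of rank `k`, the weights satisfy `0 ≤ mⱼ ≤ 1` and `∑ⱼ mⱼ = k`, and such a
weighted sum is at most the sum of the `k` largest `λⱼ`.
-/

theorem Finset.sum_mul_le_sum_of_forall_le {ι R : Type*} [Fintype ι] [DecidableEq ι]
    [CommRing R] [LinearOrder R] [IsStrictOrderedRing R]
    {g m : ι → R} {S : Finset ι} (hdom : ∀ i ∈ S, ∀ j ∉ S, g j ≤ g i)
    (hm0 : ∀ j, 0 ≤ m j) (hm1 : ∀ j, m j ≤ 1) (hsum : ∑ j, m j = S.card) :
    ∑ j, g j * m j ≤ ∑ j ∈ S, g j := by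
  obtain ⟨t, hSt, htSc⟩ : ∃ t, (∀ i ∈ S, t ≤ g i) ∧ ∀ j ∉ S, g j ≤ t := by
    rcases S.eq_empty_or_nonempty with rfl | hS
    · obtain ⟨t, ht⟩ := (Set.finite_range g).bddAbove
      exact ⟨t, by simp, fun j _ => ht ⟨j, rfl⟩⟩
    · exact ⟨S.inf' hS g, fun i hi => S.inf'_le g hi,
        fun j hj => S.le_inf' hS g fun i hi => hdom i hi j hj⟩
  have hterm : ∀ j, (g j - t) * (m j - if j ∈ S then 1 else 0) ≤ 0 := by
    intro j
    split_ifs with hj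
    · exact mul_nonpos_of_nonneg_of_nonpos (sub_nonneg.2 (hSt j hj)) (sub_nonpos.2 (hm1 j))
    · simpa using mul_nonpos_of_nonpos_of_nonneg (sub_nonpos.2 (htSc j hj)) (hm0 j)
  have hexpand : ∑ j, (g j - t) * (m j - if j ∈ S then 1 else 0)
      = ∑ j, g j * m j - ∑ j ∈ S, g j := by
    simp only [mul_sub, sub_mul, mul_ite, mul_one, mul_zero, Finset.sum_sub_distrib,
      Finset.sum_ite_mem, Finset.univ_inter, ← Finset.mul_sum, hsum, Finset.sum_const,
      nsmul_eq_mul]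
    ring
  rw [← sub_nonpos, ← hexpand]
  exact Finset.sum_nonpos fun j _ => hterm j

namespace Matrix

variable {m n : Type*} [Fintype m] [Fintype n]

def compressedTraces (k : ℕ) (A : Matrix n n ℝ) : Set ℝ :=
  {x | ∃ U : Matrix (Fin k) n ℝ, U * Uᵀ = 1 ∧ x = trace (U * A * Uᵀ)}

theorem compressedTraces_conj [DecidableEq n] {Q : Matrix n n ℝ} (hQ : Q * Qᵀ = 1)
    (k : ℕ) (A : Matrix n n ℝ) :
    compressedTraces k (Q * A * Qᵀ) = compressedTraces k A := by
  have hQ' : Qᵀ * Q = 1 := mul_eq_one_comm.mp hQ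
  ext x
  constructor
  · rintro ⟨U, hU, rfl⟩
    refine ⟨U * Q, ?_, ?_⟩
    · rw [transpose_mul, Matrix.mul_assoc, ← Matrix.mul_assoc Q, hQ, Matrix.one_mul, hU]
    · simp only [transpose_mul, Matrix.mul_assoc]
  · rintro ⟨U, hU, rfl⟩
    refine ⟨U * Qᵀ, ?_, ?_⟩
    · rw [transpose_mul, transpose_transpose, Matrix.mul_assoc, ← Matrix.mul_assoc Qᵀ, hQ',
        Matrix.one_mul, hU]
    · simp only [transpose_mul, transpose_transpose, Matrix.mul_assoc]
      rw [← Matrix.mul_assoc Qᵀ Q, hQ', Matrix.one_mul, ← Matrix.mul_assoc Qᵀ Q, hQ',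
        Matrix.one_mul]

theorem trace_mul_diagonal_mul_transpose [DecidableEq n] (W : Matrix m n ℝ) (f : n → ℝ) :
    trace (W * diagonal f * Wᵀ) = ∑ j, f j * (Wᵀ * W) j j := by
  rw [trace_mul_comm, ← Matrix.mul_assoc]
  simp only [trace, diag, mul_diagonal, mul_comm]

theorem diag_transpose_mul_self_mem_Icc [DecidableEq m] [DecidableEq n] {W : Matrix m n ℝ}
    (hW : W * Wᵀ = 1) (j : n) : (Wᵀ * W) j j ∈ Set.Icc 0 1 := by
  have hP : (Wᵀ * W).PosSemidef := by
    simpa using posSemidef_conjTranspose_mul_self W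
  have hPP : Wᵀ * W * (Wᵀ * W) = Wᵀ * W := by
    rw [Matrix.mul_assoc, ← Matrix.mul_assoc W, hW, Matrix.one_mul]
  -- `1 - Wᵀ W` is a symmetric idempotent, hence of the form `Bᵀ B`
  have hcompl : (1 - Wᵀ * W).PosSemidef := by
    have := posSemidef_conjTranspose_mul_self (1 - Wᵀ * W)
    rwa [conjTranspose_eq_transpose_of_trivial, transpose_sub, transpose_one, transpose_mul,
      transpose_transpose, Matrix.sub_mul, Matrix.one_mul, Matrix.mul_sub, Matrix.mul_one,
      hPP, sub_self, sub_zero] at this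
  have := hcompl.diag_nonneg (i := j)
  simp only [sub_apply, one_apply_eq] at this
  exact ⟨hP.diag_nonneg, by linarith⟩

theorem trace_transpose_mul_self [DecidableEq m] {W : Matrix m n ℝ} (hW : W * Wᵀ = 1) :
    trace (Wᵀ * W) = Fintype.card m := by
  rw [trace_mul_comm, hW, trace_one]

theorem isGreatest_compressedTraces_diagonal [DecidableEq n] {k : ℕ} (f : n → ℝ)
    {ρ : Fin k → n} (hρ : Function.Injective ρ)
    (hdom : ∀ a, ∀ j ∉ Set.range ρ, f j ≤ f (ρ a)) :
    IsGreatest (compressedTraces k (diagonal f)) (∑ a, f (ρ a)) := by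
  constructor
  · refine ⟨(1 : Matrix n n ℝ).submatrix ρ id, ?_, ?_⟩
    · ext a b
      simp [mul_apply, one_apply, hρ.eq_iff]
    · simp [trace, mul_apply, one_apply, diagonal_apply]
  · rintro x ⟨U, hU, rfl⟩
    have hS : ∀ i ∈ Finset.univ.map ⟨ρ, hρ⟩, ∀ j ∉ Finset.univ.map ⟨ρ, hρ⟩, f j ≤ f i := by
      simp only [Finset.mem_map, Finset.mem_univ, true_and, Function.Embedding.coeFn_mk]
      rintro _ ⟨a, rfl⟩ j hj
      exact hdom a j hj
    calc trace (U * diagonal f * Uᵀ) = ∑ j, f j * (Uᵀ * U) j j :=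
          trace_mul_diagonal_mul_transpose U f
      _ ≤ ∑ j ∈ Finset.univ.map ⟨ρ, hρ⟩, f j :=
          Finset.sum_mul_le_sum_of_forall_le hS (fun j => (diag_transpose_mul_self_mem_Icc hU j).1)
            (fun j => (diag_transpose_mul_self_mem_Icc hU j).2)
            (by simpa [trace] using trace_transpose_mul_self hU)
      _ = ∑ a, f (ρ a) := Finset.sum_map _ _ _

theorem IsHermitian.exists_mul_transpose_eq_one_and_eq_mul_diagonal [DecidableEq n]
    {A : Matrix n n ℝ} (hA : A.IsHermitian) :
    ∃ Q : Matrix n n ℝ, Q * Qᵀ = 1 ∧ A = Q * diagonal hA.eigenvalues * Qᵀ := by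
  have hstar : star (hA.eigenvectorUnitary : Matrix n n ℝ) = (hA.eigenvectorUnitary)ᵀ := by
    rw [star_eq_conjTranspose, conjTranspose_eq_transpose_of_trivial]
  refine ⟨hA.eigenvectorUnitary, ?_, ?_⟩
  · rw [← hstar]
    exact mem_unitaryGroup_iff.mp hA.eigenvectorUnitary.2
  · simpa [hstar] using hA.spectral_theorem

end Matrix

theorem Fin.castLE_lt_of_notMem_range {k d : ℕ} (hkd : k ≤ d) (a : Fin k) {j : Fin d}
    (hj : j ∉ Set.range (Fin.castLE hkd)) : Fin.castLE hkd a < j := by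
  rw [Fin.lt_def, Fin.val_castLE]
  by_contra! hja
  exact hj ⟨⟨j, by omega⟩, rfl⟩

theorem Fin.sum_filter_val_lt_eq_sum_castLE {M : Type*} [AddCommMonoid M] {k d : ℕ}
    (hkd : k ≤ d) (g : Fin d → M) :
    ∑ i ∈ Finset.univ.filter (fun i : Fin d => (i : ℕ) < k), g i
      = ∑ a : Fin k, g (Fin.castLE hkd a) := by
  have : Finset.univ.filter (fun i : Fin d => (i : ℕ) < k)
      = Finset.univ.map (Fin.castLEEmb hkd) := by
    ext i
    simp only [Finset.mem_filter, Finset.mem_univ, true_and, Finset.mem_map, Fin.castLEEmb_apply]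
    exact ⟨fun hi => ⟨⟨i, hi⟩, rfl⟩, by rintro ⟨a, rfl⟩; exact a.2⟩
  rw [this, Finset.sum_map]
  rfl

theorem eigDesc_antitone {d : ℕ} {V : Matrix (Fin d) (Fin d) ℝ} (h : V.IsHermitian) :
    Antitone (eigDesc V h) :=
  fun _ _ hij => Tuple.monotone_sort h.eigenvalues (Fin.rev_le_rev.2 hij)

theorem Matrix.IsHermitian.exists_eq_mul_diagonal_eigDesc {d : ℕ}
    {V : Matrix (Fin d) (Fin d) ℝ} (h : V.IsHermitian) :
    ∃ Q : Matrix (Fin d) (Fin d) ℝ, Q * Qᵀ = 1 ∧ V = Q * diagonal (eigDesc V h) * Qᵀ := by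
  obtain ⟨Q, hQ, hVQ⟩ := h.exists_mul_transpose_eq_one_and_eq_mul_diagonal
  let τ : Equiv.Perm (Fin d) := Fin.revPerm.trans (Tuple.sort h.eigenvalues)
  refine ⟨Q.submatrix id τ, ?_, ?_⟩
  · rw [transpose_submatrix, submatrix_mul_equiv, submatrix_id_id, hQ]
  · rw [show eigDesc V h = h.eigenvalues ∘ τ from rfl, ← submatrix_diagonal_equiv,
      transpose_submatrix, submatrix_mul_equiv, submatrix_mul_equiv, submatrix_id_id, ← hVQ]

theorem kyFan_general {d k : ℕ} (hkd : k ≤ d)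
    (V : Matrix (Fin d) (Fin d) ℝ) (hV : V.PosSemidef) :
    IsGreatest {x : ℝ | ∃ U : Matrix (Fin k) (Fin d) ℝ, U * Uᵀ = 1 ∧
        x = Matrix.trace (U * V * Uᵀ)}
      (topEigSum k V hV.isHermitian) := by
  obtain ⟨Q, hQ, hVQ⟩ := hV.isHermitian.exists_eq_mul_diagonal_eigDesc
  have hdiag := isGreatest_compressedTraces_diagonal (eigDesc V hV.isHermitian)
    (Fin.castLE_injective hkd)
    fun a _ hj => eigDesc_antitone _ (Fin.castLE_lt_of_notMem_range hkd a hj).le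
  rwa [← compressedTraces_conj hQ, ← hVQ, ← Fin.sum_filter_val_lt_eq_sum_castLE] at hdiag

/-- Ky Fan's variational principle: for a symmetric PSD `d×d` matrix `V` and `1 ≤ k ≤ d`,
the sum of the `k` largest eigenvalues of `V` is the maximum of `tr(U V Uᵀ)` over
`U ∈ ℝ^{k×d}` with `U Uᵀ = I_k`. -/
theorem kyFan {d k : ℕ} (hk : 1 ≤ k) (hkd : k ≤ d)
    (V : Matrix (Fin d) (Fin d) ℝ) (hV : V.PosSemidef) :
    IsGreatest {x : ℝ | ∃ U : Matrix (Fin k) (Fin d) ℝ, U * Uᵀ = 1 ∧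
        x = Matrix.trace (U * V * Uᵀ)}
      (topEigSum k V hV.isHermitian) :=
  kyFan_general hkd V hV
end
end

section
/- Let f : ℝ^d → ℝ^d be Borel measurable and μ, ν probability measures on ℝ^d. Then the set of couplings Π(f_#μ, f_#ν) equals {(f ⊗ f)_#π : π ∈ Π(μ, ν)}, where (f ⊗ f)(x,y) = (f(x), f(y)). -/
/-
Disintegrate `μ` along `f` as `μ = ∫ κ_y d(f_#μ)(y)`, where `κ_y` is carried by the fibre
`f⁻¹(y)`, and likewise `ν` along `g` with kernels `η_z`. A coupling `π'` of `f_#μ` and `g_#ν` then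
lifts to `π = ∫ κ_y ⊗ η_z dπ'(y, z)`: its marginals are `μ` and `ν`, and `(f × g)_#(κ_y ⊗ η_z)` is
the Dirac mass at `(y, z)`, so `(f × g)_#π = π'`. The other inclusion is functoriality of
pushforward.
-/

noncomputable section
open MeasureTheory

abbrev Ed (d : ℕ) := EuclideanSpace ℝ (Fin d)

/-- The set of couplings `Π(μ, ν)`. -/
def couplings {d : ℕ} (μ ν : Measure (Ed d)) : Set (Measure (Ed d × Ed d)) :=
  {π | IsProbabilityMeasure π ∧ π.map Prod.fst = μ ∧ π.map Prod.snd = ν}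

open ProbabilityTheory

section Lift

variable {α β γ δ : Type*} [MeasurableSpace α] [MeasurableSpace β] [MeasurableSpace γ]
  [MeasurableSpace δ]

lemma ProbabilityTheory.Kernel.map_parallelComp (κ : Kernel γ α) [IsSFiniteKernel κ]
    (η : Kernel δ β) [IsSFiniteKernel η] {f : α → γ} {g : β → δ}
    (hf : Measurable f) (hg : Measurable g) :
    (κ ∥ₖ η).map (Prod.map f g) = κ.map f ∥ₖ η.map g := by
  rw [← deterministic_comp_eq_map (hf.prodMap hg), ← deterministic_parallelComp_deterministic hf hg,
    parallelComp_comp_parallelComp, deterministic_comp_eq_map, deterministic_comp_eq_map]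

lemma map_fst_parallelComp_comp (κ : Kernel γ α) [IsSFiniteKernel κ] (η : Kernel δ β)
    [IsMarkovKernel η] (π : Measure (γ × δ)) :
    ((κ ∥ₖ η) ∘ₘ π).map Prod.fst = κ ∘ₘ π.map Prod.fst := by
  rw [Measure.map_comp _ _ measurable_fst, ← Measure.deterministic_comp_eq_map measurable_fst,
    Measure.comp_assoc, Kernel.comp_deterministic_eq_comap]
  congr 1
  ext p : 1
  simp [Kernel.map_apply _ measurable_fst, Kernel.parallelComp_apply]

lemma map_snd_parallelComp_comp (κ : Kernel γ α) [IsMarkovKernel κ] (η : Kernel δ β)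
    [IsSFiniteKernel η] (π : Measure (γ × δ)) :
    ((κ ∥ₖ η) ∘ₘ π).map Prod.snd = η ∘ₘ π.map Prod.snd := by
  rw [Measure.map_comp _ _ measurable_snd, ← Measure.deterministic_comp_eq_map measurable_snd,
    Measure.comp_assoc, Kernel.comp_deterministic_eq_comap]
  congr 1
  ext p : 1
  simp [Kernel.map_apply _ measurable_snd, Kernel.parallelComp_apply]

lemma map_prodMap_parallelComp_comp_of_ae_eq_id (κ : Kernel γ α) [IsSFiniteKernel κ]
    (η : Kernel δ β) [IsSFiniteKernel η] {f : α → γ} {g : β → δ}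
    (hf : Measurable f) (hg : Measurable g) (π : Measure (γ × δ))
    (hκ : κ.map f =ᵐ[π.map Prod.fst] Kernel.id) (hη : η.map g =ᵐ[π.map Prod.snd] Kernel.id) :
    ((κ ∥ₖ η) ∘ₘ π).map (Prod.map f g) = π := by
  rw [Measure.map_comp _ _ (hf.prodMap hg), Kernel.map_parallelComp _ _ hf hg]
  conv_rhs => rw [← Measure.id_comp (μ := π), ← Kernel.id_parallelComp_id]
  refine Measure.comp_congr ?_
  filter_upwards [ae_of_ae_map measurable_fst.aemeasurable hκ,
    ae_of_ae_map measurable_snd.aemeasurable hη] with p hκp hηp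
  rw [Kernel.parallelComp_apply, Kernel.parallelComp_apply, hκp, hηp]

end Lift

section Disintegration

variable {α β : Type*} [MeasurableSpace α] [StandardBorelSpace α] [Nonempty α]
  [MeasurableSpace β] {μ : Measure α} [IsFiniteMeasure μ] {f : α → β}

lemma condDistrib_id_comp_map (hf : Measurable f) : condDistrib id f μ ∘ₘ μ.map f = μ := by
  rw [condDistrib_comp_map hf.aemeasurable aemeasurable_id, Measure.map_id]

lemma condDistrib_id_map_ae_eq_id [MeasurableSpace.CountablyGenerated β] (hf : Measurable f) :
    (condDistrib id f μ).map f =ᵐ[μ.map f] Kernel.id := by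
  -- both sides of `f_#μ ⊗ₘ _` are the law of `(f x, f x)`
  refine Kernel.ae_eq_of_compProd_eq ?_
  rw [Measure.compProd_map hf, compProd_map_condDistrib aemeasurable_id, Measure.compProd_id,
    Measure.map_map (measurable_id.prodMap hf) (hf.prodMk measurable_id),
    Measure.map_map measurable_diag hf]
  rfl

end Disintegration

section Couplings

variable {α β γ δ : Type*} [MeasurableSpace α] [MeasurableSpace β] [MeasurableSpace γ]
  [MeasurableSpace δ] {f : α → γ} {g : β → δ}

lemma MeasureTheory.Measure.map_fst_map_prodMap (π : Measure (α × β)) (hf : Measurable f)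
    (hg : Measurable g) : (π.map (Prod.map f g)).map Prod.fst = (π.map Prod.fst).map f := by
  rw [map_map measurable_fst (hf.prodMap hg), map_map hf measurable_fst]
  rfl

lemma MeasureTheory.Measure.map_snd_map_prodMap (π : Measure (α × β)) (hf : Measurable f)
    (hg : Measurable g) : (π.map (Prod.map f g)).map Prod.snd = (π.map Prod.snd).map g := by
  rw [map_map measurable_snd (hf.prodMap hg), map_map hg measurable_snd]
  rfl

theorem exists_map_prodMap_eq_of_map_fst_of_map_snd [StandardBorelSpace α] [StandardBorelSpace β]
    [MeasurableSpace.CountablyGenerated γ] [MeasurableSpace.CountablyGenerated δ]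
    {μ : Measure α} {ν : Measure β} [IsProbabilityMeasure μ] [IsProbabilityMeasure ν]
    (hf : Measurable f) (hg : Measurable g) (π' : Measure (γ × δ)) [IsProbabilityMeasure π']
    (h₁ : π'.map Prod.fst = μ.map f) (h₂ : π'.map Prod.snd = ν.map g) :
    ∃ π : Measure (α × β), IsProbabilityMeasure π ∧ π.map Prod.fst = μ ∧ π.map Prod.snd = ν ∧
      π.map (Prod.map f g) = π' := by
  have := nonempty_of_isProbabilityMeasure μ
  have := nonempty_of_isProbabilityMeasure ν
  refine ⟨(condDistrib id f μ ∥ₖ condDistrib id g ν) ∘ₘ π', inferInstance, ?_, ?_, ?_⟩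
  · rw [map_fst_parallelComp_comp, h₁, condDistrib_id_comp_map hf]
  · rw [map_snd_parallelComp_comp, h₂, condDistrib_id_comp_map hg]
  · refine map_prodMap_parallelComp_comp_of_ae_eq_id _ _ hf hg π' ?_ ?_
    · exact h₁ ▸ condDistrib_id_map_ae_eq_id hf
    · exact h₂ ▸ condDistrib_id_map_ae_eq_id hg

end Couplings

/-- For Borel `f : ℝ^d → ℝ^d` and probability measures `μ, ν` on `ℝ^d`,
`Π(f_#μ, f_#ν) = {(f ⊗ f)_#π : π ∈ Π(μ, ν)}`. -/
theorem couplings_map_eq {d : ℕ} (f : Ed d → Ed d) (hf : Measurable f)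
    (μ ν : Measure (Ed d)) [IsProbabilityMeasure μ] [IsProbabilityMeasure ν] :
    couplings (μ.map f) (ν.map f) =
      (fun π : Measure (Ed d × Ed d) => π.map (Prod.map f f)) '' couplings μ ν := by
  ext π'
  constructor
  · rintro ⟨hπ', h₁, h₂⟩
    obtain ⟨π, hπ, hπ₁, hπ₂, rfl⟩ :=
      exists_map_prodMap_eq_of_map_fst_of_map_snd hf hf π' h₁ h₂
    exact ⟨π, ⟨hπ, hπ₁, hπ₂⟩, rfl⟩
  · rintro ⟨π, ⟨hπ, h₁, h₂⟩, rfl⟩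
    exact ⟨Measure.isProbabilityMeasure_map (hf.prodMap hf).aemeasurable,
      by rw [π.map_fst_map_prodMap hf hf, h₁], by rw [π.map_snd_map_prodMap hf hf, h₂]⟩
end
end

section
/- Let μ, ν ∈ P₂(ℝ^d) and for each L ∈ {1,…,d} let π_L ∈ Π(μ,ν) minimize the sum of the top L eigenvalues of V_π. Then for any k ∈ {1,…,d−1}: λ_{k+1}(V_{π_{k+1}}) ≤ S_{k+1}²(μ,ν) − S_k²(μ,ν) ≤ λ_{k+1}(V_{π_k}). -/
/-!
The minimizers attain the infima, `S_k² = T_k(π_k)` and `S_{k+1}² = T_{k+1}(π_{k+1})`, where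
`T_L(π)` is the sum of the top `L` eigenvalues of `V_π`, and `T_{k+1}(π) = T_k(π) + λ_{k+1}(V_π)`
for every `π`. Testing the minimality of `π_{k+1}` against `π_k` gives the upper bound, and
testing the minimality of `π_k` against `π_{k+1}` gives the lower bound.
-/

noncomputable section
open MeasureTheory Matrix

def transportCost {d : ℕ} (π : Measure (Ed d × Ed d)) : ℝ :=
  ∫ p, ‖p.1 - p.2‖ ^ 2 ∂π

/-- Squared 2-Wasserstein distance. -/
def W2sq {d : ℕ} (μ ν : Measure (Ed d)) : ℝ :=
  sInf (transportCost '' couplings μ ν)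

/-- Second-order displacement matrix `V_π = ∫ (x−y)(x−y)ᵀ dπ`, entrywise. -/
def Vpi {d : ℕ} (π : Measure (Ed d × Ed d)) : Matrix (Fin d) (Fin d) ℝ :=
  Matrix.of fun i j => ∫ p, (p.1 i - p.2 i) * (p.1 j - p.2 j) ∂π

lemma Vpi_isHermitian {d : ℕ} (π : Measure (Ed d × Ed d)) : (Vpi π).IsHermitian := by
  unfold Matrix.IsHermitian
  ext i j
  simp [Vpi, Matrix.conjTranspose_apply, mul_comm]

/-- Squared subspace robust Wasserstein distance:
`S_k²(μ,ν) = inf_{π ∈ Π(μ,ν)} Σ_{l=1}^k λ_l(V_π)`. -/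
def SRWsq {d : ℕ} (k : ℕ) (μ ν : Measure (Ed d)) : ℝ :=
  sInf ((fun π => topEigSum k (Vpi π) (Vpi_isHermitian π)) '' couplings μ ν)

lemma topEigSum_succ {d : ℕ} (k : ℕ) (hkd : k < d) (V : Matrix (Fin d) (Fin d) ℝ)
    (h : V.IsHermitian) :
    topEigSum (k + 1) V h = topEigSum k V h + eigDesc V h ⟨k, hkd⟩ := by
  have hfilter : Finset.univ.filter (fun i : Fin d => (i : ℕ) < k + 1)
      = insert ⟨k, hkd⟩ (Finset.univ.filter (fun i : Fin d => (i : ℕ) < k)) := by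
    ext i
    simp only [Finset.mem_filter, Finset.mem_univ, true_and, Finset.mem_insert, Fin.ext_iff]
    omega
  rw [topEigSum, topEigSum, hfilter, Finset.sum_insert (by simp), add_comm]

lemma SRWsq_eq_topEigSum_of_forall_le {d : ℕ} (k : ℕ) (μ ν : Measure (Ed d))
    (π : Measure (Ed d × Ed d)) (hπ : π ∈ couplings μ ν)
    (hmin : ∀ π' ∈ couplings μ ν,
      topEigSum k (Vpi π) (Vpi_isHermitian π) ≤ topEigSum k (Vpi π') (Vpi_isHermitian π')) :
    SRWsq k μ ν = topEigSum k (Vpi π) (Vpi_isHermitian π) :=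
  IsLeast.csInf_eq ⟨⟨π, hπ, rfl⟩, by rintro _ ⟨π', hπ', rfl⟩; exact hmin π' hπ'⟩

theorem SRWsq_increments_general {d : ℕ} (k : ℕ) (hkd : k < d)
    (μ ν : Measure (Ed d))
    (πk πk1 : Measure (Ed d × Ed d))
    (hπk : πk ∈ couplings μ ν) (hπk1 : πk1 ∈ couplings μ ν)
    (hmink : ∀ π ∈ couplings μ ν,
      topEigSum k (Vpi πk) (Vpi_isHermitian πk) ≤ topEigSum k (Vpi π) (Vpi_isHermitian π))
    (hmink1 : ∀ π ∈ couplings μ ν,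
      topEigSum (k+1) (Vpi πk1) (Vpi_isHermitian πk1) ≤
        topEigSum (k+1) (Vpi π) (Vpi_isHermitian π)) :
    eigDesc (Vpi πk1) (Vpi_isHermitian πk1) ⟨k, hkd⟩ ≤ SRWsq (k+1) μ ν - SRWsq k μ ν ∧
      SRWsq (k+1) μ ν - SRWsq k μ ν ≤ eigDesc (Vpi πk) (Vpi_isHermitian πk) ⟨k, hkd⟩ := by
  rw [SRWsq_eq_topEigSum_of_forall_le k μ ν πk hπk hmink,
    SRWsq_eq_topEigSum_of_forall_le (k + 1) μ ν πk1 hπk1 hmink1]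
  have hsucc_k1 := topEigSum_succ k hkd (Vpi πk1) (Vpi_isHermitian πk1)
  have hsucc_k := topEigSum_succ k hkd (Vpi πk) (Vpi_isHermitian πk)
  have hk_le := hmink πk1 hπk1
  have hk1_le := hmink1 πk hπk
  constructor <;> linarith

/-- For minimizers `π_L` of `π ↦ Σ_{l=1}^L λ_l(V_π)`, one has
`λ_{k+1}(V_{π_{k+1}}) ≤ S_{k+1}²(μ,ν) − S_k²(μ,ν) ≤ λ_{k+1}(V_{π_k})`. -/
theorem SRWsq_increments {d : ℕ} (k : ℕ) (hk : 1 ≤ k) (hkd : k < d)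
    (μ ν : Measure (Ed d)) [IsProbabilityMeasure μ] [IsProbabilityMeasure ν]
    (hμ : Integrable (fun x => ‖x‖ ^ 2) μ) (hν : Integrable (fun x => ‖x‖ ^ 2) ν)
    (πk πk1 : Measure (Ed d × Ed d))
    (hπk : πk ∈ couplings μ ν) (hπk1 : πk1 ∈ couplings μ ν)
    (hmink : ∀ π ∈ couplings μ ν,
      topEigSum k (Vpi πk) (Vpi_isHermitian πk) ≤ topEigSum k (Vpi π) (Vpi_isHermitian π))
    (hmink1 : ∀ π ∈ couplings μ ν,
      topEigSum (k+1) (Vpi πk1) (Vpi_isHermitian πk1) ≤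
        topEigSum (k+1) (Vpi π) (Vpi_isHermitian π)) :
    eigDesc (Vpi πk1) (Vpi_isHermitian πk1) ⟨k, hkd⟩ ≤ SRWsq (k+1) μ ν - SRWsq k μ ν ∧
      SRWsq (k+1) μ ν - SRWsq k μ ν ≤ eigDesc (Vpi πk) (Vpi_isHermitian πk) ⟨k, hkd⟩ :=
  SRWsq_increments_general k hkd μ ν πk πk1 hπk hπk1 hmink hmink1
end
end

section
/- For μ, ν ∈ P₂(ℝ^d) and k ∈ {1,…,d−1}: S_k(μ,ν) ≤ S_{k+1}(μ,ν) ≤ √((k+1)/k) · S_k(μ,ν). -/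
noncomputable section
open MeasureTheory Matrix

/-!
For every coupling `π`, `V_π` is the Gram matrix in `L²(π)` of the coordinate displacements
`p ↦ p.1 i - p.2 i`, hence positive semidefinite. For eigenvalues `λ₁ ≥ λ₂ ≥ ⋯ ≥ 0`, adding
`λ_{k+1}` can only increase the partial sum, and `λ_{k+1}` is at most the mean of `λ₁, …, λ_k`, so
`∑_{l ≤ k+1} λ_l ≤ (k+1)/k · ∑_{l ≤ k} λ_l`. Both pointwise inequalities pass to the infimum over
couplings, and then to square roots.
-/

open Finset

lemma memLp_coord_sub_coord {d : ℕ} {μ ν : Measure (Ed d)} {π : Measure (Ed d × Ed d)}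
    (hπ : π ∈ couplings μ ν) (hμ : Integrable (fun x => ‖x‖ ^ 2) μ)
    (hν : Integrable (fun x => ‖x‖ ^ 2) ν) (i : Fin d) :
    MemLp (fun p : Ed d × Ed d => p.1 i - p.2 i) 2 π := by
  obtain ⟨-, hfst, hsnd⟩ := hπ
  have hcoord : ∀ ρ : Measure (Ed d), Integrable (fun x => ‖x‖ ^ 2) ρ →
      MemLp (fun x : Ed d => x i) 2 ρ := fun ρ hρ =>
    ((memLp_two_iff_integrable_sq_norm aestronglyMeasurable_id).2 hρ).continuousLinearMap_comp
      (EuclideanSpace.proj i : Ed d →L[ℝ] ℝ)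
  rw [← hfst] at hμ
  rw [← hsnd] at hν
  exact ((hcoord _ hμ).comp_of_map measurable_fst.aemeasurable).sub
    ((hcoord _ hν).comp_of_map measurable_snd.aemeasurable)

lemma Vpi_eq_gram {d : ℕ} {μ ν : Measure (Ed d)} {π : Measure (Ed d × Ed d)}
    (hπ : π ∈ couplings μ ν) (hμ : Integrable (fun x => ‖x‖ ^ 2) μ)
    (hν : Integrable (fun x => ‖x‖ ^ 2) ν) :
    Vpi π = gram ℝ (fun i => (memLp_coord_sub_coord hπ hμ hν i).toLp) := by
  ext i j
  rw [gram_apply, L2.inner_def]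
  refine integral_congr_ae ?_
  filter_upwards [(memLp_coord_sub_coord hπ hμ hν i).coeFn_toLp,
    (memLp_coord_sub_coord hπ hμ hν j).coeFn_toLp] with p hi hj
  simp [hi, hj, mul_comm]

lemma Vpi_posSemidef {d : ℕ} {μ ν : Measure (Ed d)} {π : Measure (Ed d × Ed d)}
    (hπ : π ∈ couplings μ ν) (hμ : Integrable (fun x => ‖x‖ ^ 2) μ)
    (hν : Integrable (fun x => ‖x‖ ^ 2) ν) :
    (Vpi π).PosSemidef :=
  Vpi_eq_gram hπ hμ hν ▸ posSemidef_gram ℝ _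

lemma Antitone.natCast_mul_sum_range_succ_le {R : Type*} [CommSemiring R] [PartialOrder R]
    [IsOrderedRing R] {f : ℕ → R} (hf : Antitone f) (k : ℕ) :
    k * ∑ i ∈ range (k + 1), f i ≤ (k + 1) * ∑ i ∈ range k, f i := by
  have h : k • f k ≤ ∑ i ∈ range k, f i := by
    simpa using card_nsmul_le_sum (range k) f (f k) fun i hi => hf (mem_range.1 hi).le
  rw [nsmul_eq_mul] at h
  calc (k : R) * ∑ i ∈ range (k + 1), f i = k * ∑ i ∈ range k, f i + k * f k := by
        rw [sum_range_succ, mul_add]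
    _ ≤ k * ∑ i ∈ range k, f i + ∑ i ∈ range k, f i := add_le_add_right h _
    _ = (k + 1) * ∑ i ∈ range k, f i := by ring

lemma Fin.sum_filter_lt_eq_sum_range {M : Type*} [AddCommMonoid M] {d : ℕ} (k : ℕ)
    {f : ℕ → M} (hf : ∀ n, d ≤ n → f n = 0) :
    ∑ i ∈ univ.filter (fun i : Fin d => (i : ℕ) < k), f i = ∑ n ∈ range k, f n :=
  calc ∑ i ∈ univ.filter (fun i : Fin d => (i : ℕ) < k), f i
      = ∑ n ∈ (univ.filter fun i : Fin d => (i : ℕ) < k).map Fin.valEmbedding, f n := by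
        rw [sum_map]; rfl
    _ = ∑ n ∈ (range k).filter (· < d), f n := by
        congr 1
        ext n
        simp only [mem_map, mem_filter, mem_univ, true_and, Fin.valEmbedding_apply, mem_range]
        constructor
        · rintro ⟨i, hi, rfl⟩
          exact ⟨hi, i.isLt⟩
        · rintro ⟨hk, hd⟩
          exact ⟨⟨n, hd⟩, hk, rfl⟩
    _ = ∑ n ∈ range k, f n := sum_filter_of_ne fun n _ hn => by
        by_contra hnd
        exact hn (hf n (not_lt.1 hnd))

section TopEigSum

variable {d : ℕ} {V : Matrix (Fin d) (Fin d) ℝ} (h : V.IsHermitian)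

def paddedEigDesc (n : ℕ) : ℝ :=
  if hn : n < d then eigDesc V h ⟨n, hn⟩ else 0

lemma topEigSum_eq_sum_range (k : ℕ) :
    topEigSum k V h = ∑ i ∈ range k, paddedEigDesc h i := by
  rw [← Fin.sum_filter_lt_eq_sum_range k fun n hn => dif_neg hn.not_gt]
  exact sum_congr rfl fun i _ => by rw [paddedEigDesc, dif_pos i.isLt]

variable {h}

lemma paddedEigDesc_nonneg (hV : V.PosSemidef) (n : ℕ) : 0 ≤ paddedEigDesc h n := by
  unfold paddedEigDesc
  split_ifs
  exacts [hV.eigenvalues_nonneg _, le_rfl]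

lemma paddedEigDesc_antitone (hV : V.PosSemidef) : Antitone (paddedEigDesc h) := by
  intro m n hmn
  by_cases hn : n < d
  · rw [paddedEigDesc, paddedEigDesc, dif_pos hn, dif_pos (hmn.trans_lt hn)]
    exact Tuple.monotone_sort h.eigenvalues (Fin.rev_le_rev.mpr hmn)
  · rw [paddedEigDesc, dif_neg hn]
    exact paddedEigDesc_nonneg hV m

lemma topEigSum_nonneg (hV : V.PosSemidef) (k : ℕ) : 0 ≤ topEigSum k V h := by
  rw [topEigSum_eq_sum_range]
  exact sum_nonneg fun i _ => paddedEigDesc_nonneg hV i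

lemma topEigSum_le_topEigSum_succ (hV : V.PosSemidef) (k : ℕ) :
    topEigSum k V h ≤ topEigSum (k + 1) V h := by
  rw [topEigSum_eq_sum_range, topEigSum_eq_sum_range, sum_range_succ]
  exact le_add_of_nonneg_right (paddedEigDesc_nonneg hV k)

lemma topEigSum_succ_le (hV : V.PosSemidef) {k : ℕ} (hk : 0 < k) :
    topEigSum (k + 1) V h ≤ ((k + 1) / k) * topEigSum k V h := by
  rw [div_mul_eq_mul_div, le_div_iff₀ (by positivity), mul_comm, topEigSum_eq_sum_range,
    topEigSum_eq_sum_range]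
  exact (paddedEigDesc_antitone hV).natCast_mul_sum_range_succ_le k

end TopEigSum

lemma csInf_image_le_mul_csInf_image {α : Type*} {s : Set α} {f g : α → ℝ} {c : ℝ}
    (hs : s.Nonempty) (hc : 0 ≤ c) (hf : BddBelow (f '' s)) (h : ∀ x ∈ s, f x ≤ c * g x) :
    sInf (f '' s) ≤ c * sInf (g '' s) := by
  rw [← smul_eq_mul, ← Real.sInf_smul_of_nonneg hc, ← Set.image_smul, Set.image_image]
  refine le_csInf (hs.image _) ?_
  rintro _ ⟨x, hx, rfl⟩
  exact (csInf_le hf ⟨x, hx, rfl⟩).trans (h x hx)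

lemma couplings_nonempty {d : ℕ} (μ ν : Measure (Ed d)) [IsProbabilityMeasure μ]
    [IsProbabilityMeasure ν] : (couplings μ ν).Nonempty :=
  ⟨μ.prod ν, inferInstance, by simp, by simp⟩

lemma SRWsq_le_mul_SRWsq {d : ℕ} {μ ν : Measure (Ed d)} [IsProbabilityMeasure μ]
    [IsProbabilityMeasure ν] (hμ : Integrable (fun x => ‖x‖ ^ 2) μ)
    (hν : Integrable (fun x => ‖x‖ ^ 2) ν) {m n : ℕ} {c : ℝ} (hc : 0 ≤ c)
    (h : ∀ (V : Matrix (Fin d) (Fin d) ℝ) (hV : V.IsHermitian), V.PosSemidef →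
      topEigSum m V hV ≤ c * topEigSum n V hV) :
    SRWsq m μ ν ≤ c * SRWsq n μ ν := by
  refine csInf_image_le_mul_csInf_image (couplings_nonempty μ ν) hc ⟨0, ?_⟩
    fun π hπ => h _ _ (Vpi_posSemidef hπ hμ hν)
  rintro _ ⟨π, hπ, rfl⟩
  exact topEigSum_nonneg (Vpi_posSemidef hπ hμ hν) m

theorem SRW_dimension_bounds_general {d : ℕ} (k : ℕ) (hk : 1 ≤ k)
    (μ ν : Measure (Ed d)) [IsProbabilityMeasure μ] [IsProbabilityMeasure ν]
    (hμ : Integrable (fun x => ‖x‖ ^ 2) μ) (hν : Integrable (fun x => ‖x‖ ^ 2) ν) :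
    Real.sqrt (SRWsq k μ ν) ≤ Real.sqrt (SRWsq (k+1) μ ν) ∧
      Real.sqrt (SRWsq (k+1) μ ν) ≤
        Real.sqrt (((k : ℝ) + 1) / k) * Real.sqrt (SRWsq k μ ν) := by
  refine ⟨Real.sqrt_le_sqrt ?_, ?_⟩
  · simpa using SRWsq_le_mul_SRWsq (m := k) (n := k + 1) hμ hν zero_le_one fun V _ hV => by
      simpa using topEigSum_le_topEigSum_succ hV k
  · rw [← Real.sqrt_mul (by positivity)]
    exact Real.sqrt_le_sqrt <| SRWsq_le_mul_SRWsq hμ hν (by positivity) fun V _ hV =>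
      topEigSum_succ_le hV hk

/-- `S_k(μ,ν) ≤ S_{k+1}(μ,ν) ≤ √((k+1)/k)·S_k(μ,ν)`. -/
theorem SRW_dimension_bounds {d : ℕ} (k : ℕ) (hk : 1 ≤ k) (hkd : k ≤ d - 1)
    (μ ν : Measure (Ed d)) [IsProbabilityMeasure μ] [IsProbabilityMeasure ν]
    (hμ : Integrable (fun x => ‖x‖ ^ 2) μ) (hν : Integrable (fun x => ‖x‖ ^ 2) ν) :
    Real.sqrt (SRWsq k μ ν) ≤ Real.sqrt (SRWsq (k+1) μ ν) ∧
      Real.sqrt (SRWsq (k+1) μ ν) ≤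
        Real.sqrt (((k : ℝ) + 1) / k) * Real.sqrt (SRWsq k μ ν) :=
  SRW_dimension_bounds_general k hk μ ν hμ hν
end
end
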